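/- arXiv:1510.02565 — 3 statements merged into one kernel-verified Lean document; each statement's English description precedes it below -/
import Mathlib

section
/- Let a,b ∈ [0,1] with b ≠ 1. Then the operator T has a unique fixed point in [0,1]²: if a = b, the unique fixed point is (a/(1+a), a/(1+a)); if a ≠ b, the unique fixed point is (x_*, x_*) where x_* = (1−b+2a−√((1−b)²+4a)) / (2(a−b)), and x_* ∈ [0,1]. -/
/-- The symmetric evolution operator `T(x,y) = ((1−y)(a+(b−a)x), (1−x)(a+(b−a)y))`. -/
def opT (a b : ℝ) (p : ℝ × ℝ) : ℝ × ℝ :=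
  ((1 - p.2) * (a + (b - a) * p.1), (1 - p.1) * (a + (b - a) * p.2))

/-!
Subtracting the two coordinates of `opT a b (x, y) = (x, y)` gives `(1 - b) (x - y) = 0`, so every
fixed point lies on the diagonal, where the fixed-point equation becomes the quadratic
`q(x) = (b - a) x² + (1 - b + 2a) x - a = 0`. Its derivative is affine and positive at both ends
of `[0, 1]`, so `q` is strictly increasing there and has at most one root in `[0, 1]`. That root
is `2a / (1 - b + 2a + √((1 - b)² + 4a))`; rationalising the numerator of the paper's formula
gives this expression, which also covers `a = b`, where it equals `a / (1 + a)`.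
-/

open Set

def diagQuad (a b x : ℝ) : ℝ := (b - a) * x ^ 2 + (1 - b + 2 * a) * x - a

noncomputable def diagFix (a b : ℝ) : ℝ := 2 * a / (1 - b + 2 * a + √((1 - b) ^ 2 + 4 * a))

variable {a b : ℝ}

lemma opT_eq_self_iff (hb : b ≠ 1) {p : ℝ × ℝ} :
    opT a b p = p ↔ p.2 = p.1 ∧ diagQuad a b p.1 = 0 := by
  obtain ⟨x, y⟩ := p
  simp only [opT, diagQuad, Prod.mk.injEq]
  constructor
  · rintro ⟨hx, hy⟩
    have hyx : y = x := by
      have : (1 - b) * (y - x) = 0 := by linear_combination hx - hy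
      linarith [(mul_eq_zero.mp this).resolve_left (sub_ne_zero.mpr hb.symm)]
    subst hyx
    exact ⟨rfl, by linear_combination -hx⟩
  · rintro ⟨rfl, hq⟩
    constructor <;> linear_combination -hq

lemma strictMonoOn_diagQuad (ha : 0 ≤ a) (hb0 : 0 ≤ b) (hb1 : b < 1) :
    StrictMonoOn (diagQuad a b) (Icc 0 1) := by
  rintro x ⟨hx0, hx1⟩ y ⟨hy0, hy1⟩ hxy
  have hslope : 0 < (b - a) * (x + y) + (1 - b + 2 * a) := by
    nlinarith [mul_nonneg (add_nonneg hx0 hy0) hb0, mul_nonneg ha (by linarith : 0 ≤ 2 - x - y)]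
  have hdiff : diagQuad a b y - diagQuad a b x =
      (y - x) * ((b - a) * (x + y) + (1 - b + 2 * a)) := by
    unfold diagQuad; ring
  nlinarith [mul_pos (sub_pos.mpr hxy) hslope]

section diagFix

variable (ha : 0 ≤ a) (hb : b < 1)
include ha hb

lemma diagFix_denom_pos : 0 < 1 - b + 2 * a + √((1 - b) ^ 2 + 4 * a) := by
  positivity [Real.sqrt_nonneg ((1 - b) ^ 2 + 4 * a)]

lemma diagFix_mem_Icc : diagFix a b ∈ Icc 0 1 := by
  have hd := diagFix_denom_pos ha hb
  refine ⟨div_nonneg (by positivity) hd.le, (div_le_one hd).mpr ?_⟩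
  linarith [Real.sqrt_nonneg ((1 - b) ^ 2 + 4 * a)]

lemma diagQuad_diagFix : diagQuad a b (diagFix a b) = 0 := by
  have hd := diagFix_denom_pos ha hb
  have hs : √((1 - b) ^ 2 + 4 * a) ^ 2 = (1 - b) ^ 2 + 4 * a := Real.sq_sqrt (by positivity)
  set d := 1 - b + 2 * a + √((1 - b) ^ 2 + 4 * a)
  have hx : diagFix a b * d = 2 * a := div_mul_cancel₀ _ hd.ne'
  have hq : diagQuad a b (diagFix a b) * d ^ 2 = 0 := by
    unfold diagQuad
    linear_combination ((b - a) * (diagFix a b * d + 2 * a) + (1 - b + 2 * a) * d) * hx - a * hs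
  exact (mul_eq_zero.mp hq).resolve_right (pow_ne_zero 2 hd.ne')

lemma diagFix_eq_of_ne (hab : a ≠ b) :
    (1 - b + 2 * a - √((1 - b) ^ 2 + 4 * a)) / (2 * (a - b)) = diagFix a b := by
  have hd := diagFix_denom_pos ha hb
  have hs : √((1 - b) ^ 2 + 4 * a) ^ 2 = (1 - b) ^ 2 + 4 * a := Real.sq_sqrt (by positivity)
  have hab' : 2 * (a - b) ≠ 0 := mul_ne_zero two_ne_zero (sub_ne_zero.mpr hab)
  rw [diagFix, div_eq_div_iff hab' hd.ne']
  linear_combination -hs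

end diagFix

lemma diagFix_self (ha : 0 ≤ a) : diagFix a a = a / (1 + a) := by
  have hs : √((1 - a) ^ 2 + 4 * a) = 1 + a := by
    rw [show (1 - a) ^ 2 + 4 * a = (1 + a) ^ 2 by ring, Real.sqrt_sq (by linarith)]
  rw [diagFix, hs, show 1 - a + 2 * a + (1 + a) = 2 * (1 + a) by ring,
    mul_div_mul_left _ _ two_ne_zero]

lemma fixedPoints_opT (ha : 0 ≤ a) (hb0 : 0 ≤ b) (hb1 : b < 1) :
    {p : ℝ × ℝ | p ∈ Icc (0 : ℝ) 1 ×ˢ Icc (0 : ℝ) 1 ∧ opT a b p = p} =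
      {(diagFix a b, diagFix a b)} := by
  ext ⟨x, y⟩
  simp only [mem_ofPred_eq, mem_singleton_iff, mem_prod, opT_eq_self_iff hb1.ne, Prod.mk.injEq]
  constructor
  · rintro ⟨⟨hx, -⟩, rfl, hq⟩
    have := (strictMonoOn_diagQuad ha hb0 hb1).injOn hx (diagFix_mem_Icc ha hb1)
      (hq.trans (diagQuad_diagFix ha hb1).symm)
    exact ⟨this, this⟩
  · rintro ⟨rfl, rfl⟩
    exact ⟨⟨diagFix_mem_Icc ha hb1, diagFix_mem_Icc ha hb1⟩, rfl, diagQuad_diagFix ha hb1⟩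

/-- For `b ≠ 1` the symmetric operator `T` has a unique fixed point in `[0,1]²`:
`(a/(1+a), a/(1+a))` if `a = b`, and `(x₀, x₀)` with
`x₀ = (1−b+2a−√((1−b)²+4a))/(2(a−b))` if `a ≠ b`. -/
theorem fix_opT_sym_unique (a b : ℝ) (ha : a ∈ Set.Icc (0 : ℝ) 1)
    (hb : b ∈ Set.Icc (0 : ℝ) 1) (hb1 : b ≠ 1) :
    (a = b →
      {p : ℝ × ℝ | p ∈ Set.Icc (0 : ℝ) 1 ×ˢ Set.Icc (0 : ℝ) 1 ∧ opT a b p = p} =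
        {(a / (1 + a), a / (1 + a))}) ∧
    (a ≠ b →
      (1 - b + 2 * a - Real.sqrt ((1 - b) ^ 2 + 4 * a)) / (2 * (a - b)) ∈
          Set.Icc (0 : ℝ) 1 ∧
      {p : ℝ × ℝ | p ∈ Set.Icc (0 : ℝ) 1 ×ˢ Set.Icc (0 : ℝ) 1 ∧ opT a b p = p} =
        {((1 - b + 2 * a - Real.sqrt ((1 - b) ^ 2 + 4 * a)) / (2 * (a - b)),
          (1 - b + 2 * a - Real.sqrt ((1 - b) ^ 2 + 4 * a)) / (2 * (a - b)))}) := by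
  have hb1' : b < 1 := lt_of_le_of_ne hb.2 hb1
  refine ⟨fun hab => ?_, fun hab => ?_⟩
  · rw [fixedPoints_opT ha.1 hb.1 hb1', ← hab, diagFix_self ha.1]
  · rw [diagFix_eq_of_ne ha.1 hb1' hab]
    exact ⟨diagFix_mem_Icc ha.1 hb1', fixedPoints_opT ha.1 hb.1 hb1'⟩
end

section
/- Let (x^{(n)}, y^{(n)}) = T^n(x^{(0)}, y^{(0)}) be the trajectory of a point (x^{(0)},y^{(0)}) ∈ [0,1]² under the symmetric operator T. Then: (1) x^{(n+1)} − y^{(n+1)} = b (x^{(n)} − y^{(n)}) for all n ≥ 0; (2) if b = 1 then x^{(n)} − y^{(n)} = x^{(0)} − y^{(0)} for all n; (3) if b ≠ 1 then lim_{n→∞} (x^{(n)} − y^{(n)}) = 0. -/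
open Filter Topology

lemma opT_fst_sub_snd (a b : ℝ) (q : ℝ × ℝ) :
    (opT a b q).1 - (opT a b q).2 = b * (q.1 - q.2) := by
  simp only [opT]
  ring

lemma opT_iterate_fst_sub_snd (a b : ℝ) (p : ℝ × ℝ) (n : ℕ) :
    ((opT a b)^[n] p).1 - ((opT a b)^[n] p).2 = b ^ n * (p.1 - p.2) := by
  induction n with
  | zero => simp
  | succ n ih =>
    rw [Function.iterate_succ_apply', opT_fst_sub_snd, ih]
    ring

theorem opT_sym_difference_general (a b : ℝ)
    (hb : b ∈ Set.Icc (0 : ℝ) 1) (p : ℝ × ℝ) :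
    (∀ n : ℕ,
      ((opT a b)^[n + 1] p).1 - ((opT a b)^[n + 1] p).2 =
        b * (((opT a b)^[n] p).1 - ((opT a b)^[n] p).2)) ∧
    (b = 1 → ∀ n : ℕ, ((opT a b)^[n] p).1 - ((opT a b)^[n] p).2 = p.1 - p.2) ∧
    (b ≠ 1 →
      Tendsto (fun n : ℕ => ((opT a b)^[n] p).1 - ((opT a b)^[n] p).2) atTop (𝓝 0)) := by
  simp only [opT_iterate_fst_sub_snd]
  refine ⟨fun n => by ring, fun hb1 n => by rw [hb1, one_pow, one_mul], fun hb1 => ?_⟩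
  have hb_pow : Tendsto (b ^ ·) atTop (𝓝 0) :=
    tendsto_pow_atTop_nhds_zero_of_lt_one hb.1 (hb.2.lt_of_ne hb1)
  simpa using hb_pow.mul_const (p.1 - p.2)

/-- Along any trajectory of the symmetric operator `T`:
`x^{(n+1)} − y^{(n+1)} = b(x^{(n)} − y^{(n)})`; if `b = 1` the difference is constant;
if `b ≠ 1` the difference tends to `0`. -/
theorem opT_sym_difference (a b : ℝ) (ha : a ∈ Set.Icc (0 : ℝ) 1)
    (hb : b ∈ Set.Icc (0 : ℝ) 1) (p : ℝ × ℝ)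
    (hp : p ∈ Set.Icc (0 : ℝ) 1 ×ˢ Set.Icc (0 : ℝ) 1) :
    (∀ n : ℕ,
      ((opT a b)^[n + 1] p).1 - ((opT a b)^[n + 1] p).2 =
        b * (((opT a b)^[n] p).1 - ((opT a b)^[n] p).2)) ∧
    (b = 1 → ∀ n : ℕ, ((opT a b)^[n] p).1 - ((opT a b)^[n] p).2 = p.1 - p.2) ∧
    (b ≠ 1 →
      Tendsto (fun n : ℕ => ((opT a b)^[n] p).1 - ((opT a b)^[n] p).2) atTop (𝓝 0)) :=
  opT_sym_difference_general a b hb p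
end

section
/- If a = b and 0 ≤ a < 1, then for every initial point (x^{(0)},y^{(0)}) ∈ [0,1]² the trajectory under the symmetric operator T converges: lim_{n→∞} (x^{(n)}, y^{(n)}) = (a/(1+a), a/(1+a)). -/
/-!
For `a = b` the map `T` is affine, `T(x, y) = (a(1 - y), a(1 - x))`, so `T p - T q` is `-a` times
`p - q` with its coordinates swapped. In the sup metric of `ℝ × ℝ` it is therefore a contraction
with constant `a < 1`, and the Banach fixed point theorem makes every trajectory converge
to its unique fixed point, which is the diagonal solution `x = a(1 - x)`.
-/

open Filter Topology

theorem opT_self_apply (a : ℝ) (p : ℝ × ℝ) : opT a a p = (a * (1 - p.2), a * (1 - p.1)) := by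
  ext <;> simp only [opT] <;> ring

theorem dist_opT_self (a : ℝ) (ha : 0 ≤ a) (p q : ℝ × ℝ) :
    dist (opT a a p) (opT a a q) = a * dist p q := by
  have hcoord : ∀ s t : ℝ, dist (a * (1 - s)) (a * (1 - t)) = a * dist s t := by
    intro s t
    rw [Real.dist_eq, Real.dist_eq, ← mul_sub, abs_mul, abs_of_nonneg ha, sub_sub_sub_cancel_left,
      abs_sub_comm]
  rw [opT_self_apply, opT_self_apply, Prod.dist_eq, Prod.dist_eq, hcoord, hcoord,
    ← mul_max_of_nonneg _ _ ha, max_comm]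

theorem contractingWith_opT_self (a : ℝ) (ha0 : 0 ≤ a) (ha1 : a < 1) :
    ContractingWith ⟨a, ha0⟩ (opT a a) :=
  ⟨ha1, LipschitzWith.of_dist_le_mul fun p q => (dist_opT_self a ha0 p q).le⟩

theorem isFixedPt_opT_self (a : ℝ) (ha : 1 + a ≠ 0) :
    Function.IsFixedPt (opT a a) (a / (1 + a), a / (1 + a)) := by
  have hdiag : a * (1 - a / (1 + a)) = a / (1 + a) := by
    field_simp
    ring
  rw [Function.IsFixedPt, opT_self_apply, hdiag]

theorem opT_sym_limit_eq_case_general (a b : ℝ) (hab : a = b) (ha0 : 0 ≤ a) (ha1 : a < 1)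
    (p : ℝ × ℝ) :
    Tendsto (fun n : ℕ => (opT a b)^[n] p) atTop (𝓝 (a / (1 + a), a / (1 + a))) := by
  subst hab
  have hT := contractingWith_opT_self a ha0 ha1
  rw [hT.fixedPoint_unique (isFixedPt_opT_self a (by positivity))]
  exact hT.tendsto_iterate_fixedPoint p

/-- If `a = b` and `0 ≤ a < 1`, every trajectory of the symmetric operator `T`
starting in `[0,1]²` converges to `(a/(1+a), a/(1+a))`. -/
theorem opT_sym_limit_eq_case (a b : ℝ) (hab : a = b) (ha0 : 0 ≤ a) (ha1 : a < 1)
    (p : ℝ × ℝ) (hp : p ∈ Set.Icc (0 : ℝ) 1 ×ˢ Set.Icc (0 : ℝ) 1) :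
    Tendsto (fun n : ℕ => (opT a b)^[n] p) atTop (𝓝 (a / (1 + a), a / (1 + a))) :=
  opT_sym_limit_eq_case_general a b hab ha0 ha1 p
end
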